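/- arXiv:0712.4001 — 2 statements merged into one kernel-verified Lean document; each statement's English description precedes it below -/
import Mathlib

section
/- Assume √2·L < 1. Then there exists exactly one bounded Lebesgue-measurable function ξ : ℝ → ℝ^{m+1} with ξ = Tξ pointwise on ℝ, and this ξ belongs to Ω (this is the existence-and-uniqueness part of Theorem 1: the system admits a unique solution bounded on ℝ). -/
/-!
For the norm `sup_t ‖φ(t)‖₂`, `T` is a contraction with constant `√2·L`. The kernel
`e^{-k(t-s)}` on `(-∞, t]` has total mass `1/k`; since each period `[iω, (i+1)ω)` contains exactly
one impulse time, the weights `e^{-k(t-θᵢ)}` of the impulses before `t` are dominated by a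
geometric series with sum `e^{kω}/(1 - e^{-kω})`; and passing to the differences `φ₀ - φⱼ` costs
the factors `√(2m)` and `√2`. Picard iteration from `0` therefore converges uniformly, its limit
is measurable as a pointwise limit of measurable functions, and two bounded fixed points coincide
because their distance `D` satisfies `D ≤ √2·L·D`. The same two estimates bound `Tφ` by the
constants defining `Ω`.
-/


/-- The Euclidean norm on `Fin n → ℝ`. -/
noncomputable def eNorm {n : ℕ} (v : Fin n → ℝ) : ℝ := Real.sqrt (∑ j, v j ^ 2)

/-- The operator `T` of the paper: coordinate `0` (the systemic arterial pressure) gets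
`(Tφ)₀(t) = −∫_{−∞}^t e^{−k₀(t−s)} g₀(φ₀(s)−φ₁(s),…,φ₀(s)−φ_m(s)) ds
  + Σ_{θ_i < t} e^{−k₀(t−θ_i)} (I₀ + J₀(φ₀(θ_i)))`,
and the compartment coordinates `j = 1,…,m` (nonzero indices of `Fin (m+1)`) get
`(Tφ)_j(t) = ∫_{−∞}^t e^{−k_j(t−s)} g_j(φ₀(s)−φ_j(s)) ds`. -/
noncomputable def Tmap (m : ℕ) (θ : ℤ → ℝ) (k : Fin (m + 1) → ℝ) (I₀ : ℝ)
    (g₀ : (Fin m → ℝ) → ℝ) (g : Fin (m + 1) → ℝ → ℝ) (J₀ : ℝ → ℝ)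
    (φ : ℝ → Fin (m + 1) → ℝ) : ℝ → Fin (m + 1) → ℝ := fun t j =>
  if j = 0 then
    -(∫ s in Set.Iic t, Real.exp (-(k 0) * (t - s)) * g₀ (fun i => φ s 0 - φ s i.succ))
      + ∑' i : ℤ, (if θ i < t then Real.exp (-(k 0) * (t - θ i)) * (I₀ + J₀ (φ (θ i) 0)) else 0)
  else
    ∫ s in Set.Iic t, Real.exp (-(k j) * (t - s)) * g j (φ s 0 - φ s j)

/-- The set `Ω`: bounded measurable functions `φ : ℝ → ℝ^{m+1}` with
`|φ₀(t)| ≤ m₀/k₀ + (I₀ + m_J)·e^{k₀ω}/(1 − e^{−k₀ω})` and `|φ_j(t)| ≤ m_j/k_j`. -/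
def OmegaSet (m : ℕ) (ω : ℝ) (k mc : Fin (m + 1) → ℝ) (I₀ mJ : ℝ) :
    Set (ℝ → Fin (m + 1) → ℝ) :=
  {φ | Measurable φ ∧ (∃ B, ∀ t, eNorm (φ t) ≤ B) ∧ ∀ t,
    |φ t 0| ≤ mc 0 / k 0 + (I₀ + mJ) * Real.exp (k 0 * ω) / (1 - Real.exp (-(k 0) * ω)) ∧
    ∀ j, j ≠ 0 → |φ t j| ≤ mc j / k j}

open MeasureTheory Set Filter Topology Real

section EuclideanNorm

variable {n : ℕ}

lemma eNorm_eq_norm_toLp (v : Fin n → ℝ) : eNorm v = ‖WithLp.toLp 2 v‖ := by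
  simp [eNorm, EuclideanSpace.norm_eq]

lemma eNorm_sub_eq (a b : Fin n → ℝ) :
    eNorm (fun j => a j - b j) = ‖WithLp.toLp 2 a - WithLp.toLp 2 b‖ := by
  rw [eNorm_eq_norm_toLp, ← WithLp.toLp_sub]
  rfl

lemma abs_le_eNorm (v : Fin n → ℝ) (j : Fin n) : |v j| ≤ eNorm v := by
  rw [← Real.sqrt_sq_eq_abs]
  exact Real.sqrt_le_sqrt (Finset.single_le_sum (fun i _ => sq_nonneg (v i)) (Finset.mem_univ j))

lemma eNorm_le_of_abs_le {v : Fin (n + 1) → ℝ} {a : ℝ} {b : Fin n → ℝ} (h0 : |v 0| ≤ a)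
    (hsucc : ∀ i, |v i.succ| ≤ b i) : eNorm v ≤ √(a ^ 2 + ∑ i, b i ^ 2) := by
  refine Real.sqrt_le_sqrt ?_
  rw [Fin.sum_univ_succ]
  exact add_le_add (sq_le_sq' (abs_le.1 h0).1 (abs_le.1 h0).2)
    (Finset.sum_le_sum fun i _ => sq_le_sq' (abs_le.1 (hsucc i)).1 (abs_le.1 (hsucc i)).2)

lemma abs_sub_le_sqrt_two_mul_eNorm (v : Fin n → ℝ) {i j : Fin n} (hij : i ≠ j) :
    |v i - v j| ≤ √2 * eNorm v := by
  have hpair : v i ^ 2 + v j ^ 2 ≤ ∑ l, v l ^ 2 := by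
    rw [← Finset.sum_pair (f := fun l => v l ^ 2) hij]
    exact Finset.sum_le_sum_of_subset_of_nonneg (Finset.subset_univ _) fun l _ _ => sq_nonneg _
  rw [eNorm, ← Real.sqrt_mul zero_le_two, ← Real.sqrt_sq_eq_abs]
  exact Real.sqrt_le_sqrt (by nlinarith [sq_nonneg (v i + v j)])

lemma eNorm_sub_succ_le (v : Fin (n + 1) → ℝ) :
    eNorm (fun i : Fin n => v 0 - v i.succ) ≤ √(2 * n) * eNorm v := by
  rw [eNorm, eNorm, ← Real.sqrt_mul (by positivity)]
  refine Real.sqrt_le_sqrt ?_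
  have hterm (i : Fin n) : (v 0 - v i.succ) ^ 2 ≤ 2 * v 0 ^ 2 + 2 * n * v i.succ ^ 2 := by
    have : (1 : ℝ) ≤ n := by exact_mod_cast i.pos
    nlinarith [sq_nonneg (v 0 + v i.succ), sq_nonneg (v i.succ)]
  calc ∑ i : Fin n, (v 0 - v i.succ) ^ 2
      ≤ ∑ i : Fin n, (2 * v 0 ^ 2 + 2 * n * v i.succ ^ 2) := Finset.sum_le_sum fun i _ => hterm i
    _ = 2 * n * ∑ j, v j ^ 2 := by
      rw [Fin.sum_univ_succ, mul_add, Finset.mul_sum, Finset.sum_add_distrib]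
      simp only [Finset.sum_const, Finset.card_univ, Fintype.card_fin, nsmul_eq_mul]
      ring

lemma continuous_of_abs_sub_le_mul_eNorm {f : (Fin n → ℝ) → ℝ} {K : ℝ}
    (hf : ∀ z w, |f z - f w| ≤ K * eNorm (fun i => z i - w i)) : Continuous f := by
  have hlip : LipschitzWith K.toNNReal fun x : EuclideanSpace ℝ (Fin n) => f x.ofLp :=
    LipschitzWith.of_dist_le' fun x y => (hf x.ofLp y.ofLp).trans_eq (by rw [eNorm_sub_eq]; rfl)
  exact hlip.continuous.comp (PiLp.continuous_toLp 2 _)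

end EuclideanNorm

section ExpKernel

noncomputable def expKernelIntegral (k : ℝ) (h : ℝ → ℝ) (t : ℝ) : ℝ :=
  ∫ s in Iic t, exp (-k * (t - s)) * h s

variable {k C : ℝ} {h : ℝ → ℝ}

lemma norm_exp_kernel_mul_le (hC : ∀ s, |h s| ≤ C) (t s : ℝ) :
    ‖exp (-k * (t - s)) * h s‖ ≤ exp (-k * t) * exp (k * s) * C := by
  rw [norm_mul, Real.norm_of_nonneg (exp_pos _).le, ← exp_add, Real.norm_eq_abs]
  exact mul_le_mul (le_of_eq (by ring_nf)) (hC s) (abs_nonneg _) (exp_pos _).le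

lemma integrableOn_exp_kernel_mul (hk : 0 < k) (hh : Measurable h) (hC : ∀ s, |h s| ≤ C)
    (t : ℝ) : IntegrableOn (fun s => exp (-k * (t - s)) * h s) (Iic t) :=
  Integrable.mono' (((integrableOn_exp_mul_Iic hk t).const_mul (exp (-k * t))).mul_const C)
    ((Continuous.measurable (by fun_prop)).mul hh).aestronglyMeasurable
    (ae_of_all _ (norm_exp_kernel_mul_le hC t))

lemma abs_expKernelIntegral_le (hk : 0 < k) (hC : ∀ s, |h s| ≤ C)
    (t : ℝ) : |expKernelIntegral k h t| ≤ C / k := by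
  rw [← Real.norm_eq_abs, expKernelIntegral]
  refine (norm_integral_le_of_norm_le
    (((integrableOn_exp_mul_Iic hk t).const_mul (exp (-k * t))).mul_const C)
    (ae_of_all _ (norm_exp_kernel_mul_le hC t))).trans_eq ?_
  rw [integral_mul_const, integral_const_mul, integral_exp_mul_Iic hk, mul_div_assoc',
    ← exp_add, neg_mul, neg_add_cancel, exp_zero]
  ring

lemma abs_expKernelIntegral_sub_le (hk : 0 < k) {h₁ h₂ : ℝ → ℝ} {C₁ C₂ D : ℝ}
    (hh₁ : Measurable h₁) (hh₂ : Measurable h₂) (hC₁ : ∀ s, |h₁ s| ≤ C₁) (hC₂ : ∀ s, |h₂ s| ≤ C₂)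
    (hD : ∀ s, |h₁ s - h₂ s| ≤ D) (t : ℝ) :
    |expKernelIntegral k h₁ t - expKernelIntegral k h₂ t| ≤ D / k := by
  have hsub : expKernelIntegral k h₁ t - expKernelIntegral k h₂ t =
      expKernelIntegral k (fun s => h₁ s - h₂ s) t := by
    rw [expKernelIntegral, expKernelIntegral, expKernelIntegral,
      ← integral_sub (integrableOn_exp_kernel_mul hk hh₁ hC₁ t)
        (integrableOn_exp_kernel_mul hk hh₂ hC₂ t)]
    simp_rw [mul_sub]
  rw [hsub]
  exact abs_expKernelIntegral_le hk hD t

lemma measurable_expKernelIntegral (k : ℝ) (hh : Measurable h) :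
    Measurable (expKernelIntegral k h) := by
  have hind : expKernelIntegral k h =
      fun t => ∫ s, (Iic t).indicator (fun s => exp (-k * (t - s)) * h s) s := by
    funext t
    exact (integral_indicator measurableSet_Iic).symm
  rw [hind]
  refine (StronglyMeasurable.integral_prod_right ?_).measurable
  have huncurry :
      Function.uncurry (fun t s => (Iic t).indicator (fun s => exp (-k * (t - s)) * h s) s) = fun p : ℝ × ℝ => if p.2 ≤ p.1 then exp (-k * (p.1 - p.2)) * h p.2 else 0 := by
    funext p
    simp [Set.indicator, Function.uncurry]
  rw [huncurry]
  exact (Measurable.ite (measurableSet_le measurable_snd measurable_fst) (by fun_prop)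
    measurable_const).stronglyMeasurable

end ExpKernel

lemma measurable_tsum_of_summable {α ι : Type*} [MeasurableSpace α] [Countable ι]
    {f : ι → α → ℝ} (hf : ∀ i, Measurable (f i)) (hs : ∀ x, Summable fun i => f i x) :
    Measurable fun x => ∑' i, f i x :=
  measurable_of_tendsto_metrizable' atTop (fun s => Finset.measurable_sum s fun i _ => hf i)
    (tendsto_pi_nhds.2 fun x => (hs x).hasSum)

section Impulses

noncomputable def impulseTerm (θ : ℤ → ℝ) (k : ℝ) (w : ℤ → ℝ) (t : ℝ) (i : ℤ) : ℝ :=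
  if θ i < t then exp (-k * (t - θ i)) * w i else 0

noncomputable def impulseSum (θ : ℤ → ℝ) (k : ℝ) (w : ℤ → ℝ) (t : ℝ) : ℝ :=
  ∑' i, impulseTerm θ k w t i

variable {ω k C : ℝ} {θ : ℤ → ℝ} {w : ℤ → ℝ}

lemma support_impulseTerm_subset (hω : 0 < ω) (hθ : ∀ i : ℤ, (i : ℝ) * ω ≤ θ i) (t : ℝ) :
    Function.support (impulseTerm θ k w t) ⊆ range fun n : ℕ => ⌊t / ω⌋ - n := by
  refine Function.support_subset_iff'.2 fun i hi => if_neg ?_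
  have hfloor : ⌊t / ω⌋ < i := by
    by_contra! hle
    exact hi ⟨(⌊t / ω⌋ - i).toNat, by dsimp only; omega⟩
  have hlt : t < ((⌊t / ω⌋ : ℝ) + 1) * ω := (div_lt_iff₀ hω).1 (Int.lt_floor_add_one _)
  have hle : (⌊t / ω⌋ : ℝ) + 1 ≤ i := by exact_mod_cast hfloor
  nlinarith [hθ i]

lemma abs_impulseTerm_floor_sub_le (hω : 0 < ω) (hθ : ∀ i : ℤ, θ i < ((i : ℝ) + 1) * ω)
    (hk : 0 ≤ k) (hw : ∀ i, |w i| ≤ C) (t : ℝ) (n : ℕ) :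
    |impulseTerm θ k w t (⌊t / ω⌋ - n)| ≤ C * exp (k * ω) * exp (-k * ω) ^ n := by
  have hC : 0 ≤ C := (abs_nonneg _).trans (hw 0)
  unfold impulseTerm
  split_ifs
  · have hfloor : (⌊t / ω⌋ : ℝ) * ω ≤ t := (le_div_iff₀ hω).1 (Int.floor_le _)
    have hθn : θ (⌊t / ω⌋ - n) < ((⌊t / ω⌋ : ℝ) - n + 1) * ω := by
      simpa using hθ (⌊t / ω⌋ - n)
    have hexp : exp (-k * (t - θ (⌊t / ω⌋ - n))) ≤ exp (k * ω) * exp (-k * ω) ^ n := by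
      rw [← exp_nat_mul, ← exp_add]
      exact exp_le_exp.2 (by nlinarith)
    rw [abs_mul, abs_of_pos (exp_pos _), mul_comm C, mul_right_comm]
    exact mul_le_mul hexp (hw _) (abs_nonneg _) (by positivity)
  · rw [abs_zero]
    positivity

lemma summable_impulseTerm (hω : 0 < ω) (hθ : ∀ i : ℤ, (i : ℝ) * ω ≤ θ i ∧ θ i < ((i : ℝ) + 1) * ω)
    (hk : 0 < k) (hw : ∀ i, |w i| ≤ C) (t : ℝ) : Summable (impulseTerm θ k w t) := by
  have hinj : Function.Injective fun n : ℕ => ⌊t / ω⌋ - n := fun a b hab => by simpa using hab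
  refine (hinj.summable_iff (Function.support_subset_iff'.1
    (support_impulseTerm_subset hω (fun i => (hθ i).1) t))).1 ?_
  have hr : exp (-k * ω) < 1 := Real.exp_lt_one_iff.2 (by nlinarith)
  exact Summable.of_norm_bounded ((summable_geometric_of_lt_one (exp_pos _).le hr).mul_left _)
    (abs_impulseTerm_floor_sub_le hω (fun i => (hθ i).2) hk.le hw t)

lemma abs_impulseSum_le (hω : 0 < ω) (hθ : ∀ i : ℤ, (i : ℝ) * ω ≤ θ i ∧ θ i < ((i : ℝ) + 1) * ω)
    (hk : 0 < k) (hw : ∀ i, |w i| ≤ C) (t : ℝ) :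
    |impulseSum θ k w t| ≤ C * (exp (k * ω) / (1 - exp (-k * ω))) := by
  have hinj : Function.Injective fun n : ℕ => ⌊t / ω⌋ - n := fun a b hab => by simpa using hab
  have hr : exp (-k * ω) < 1 := Real.exp_lt_one_iff.2 (by nlinarith)
  rw [impulseSum, ← hinj.tsum_eq (support_impulseTerm_subset hω (fun i => (hθ i).1) t),
    ← Real.norm_eq_abs]
  refine (tsum_of_norm_bounded ((hasSum_geometric_of_lt_one (exp_pos _).le hr).mul_left _)
    (abs_impulseTerm_floor_sub_le hω (fun i => (hθ i).2) hk.le hw t)).trans_eq ?_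
  ring

lemma abs_impulseSum_sub_le (hω : 0 < ω)
    (hθ : ∀ i : ℤ, (i : ℝ) * ω ≤ θ i ∧ θ i < ((i : ℝ) + 1) * ω) (hk : 0 < k)
    {w₁ w₂ : ℤ → ℝ} {C₁ C₂ D : ℝ} (hC₁ : ∀ i, |w₁ i| ≤ C₁) (hC₂ : ∀ i, |w₂ i| ≤ C₂)
    (hD : ∀ i, |w₁ i - w₂ i| ≤ D) (t : ℝ) :
    |impulseSum θ k w₁ t - impulseSum θ k w₂ t| ≤ D * (exp (k * ω) / (1 - exp (-k * ω))) := by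
  have hsub : impulseSum θ k w₁ t - impulseSum θ k w₂ t =
      impulseSum θ k (fun i => w₁ i - w₂ i) t := by
    rw [impulseSum, impulseSum, impulseSum, ← (summable_impulseTerm hω hθ hk hC₁ t).tsum_sub
      (summable_impulseTerm hω hθ hk hC₂ t)]
    congr 1
    funext i
    unfold impulseTerm
    split_ifs <;> ring
  rw [hsub]
  exact abs_impulseSum_le hω hθ hk hD t

lemma measurable_impulseSum (hω : 0 < ω)
    (hθ : ∀ i : ℤ, (i : ℝ) * ω ≤ θ i ∧ θ i < ((i : ℝ) + 1) * ω) (hk : 0 < k)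
    (hw : ∀ i, |w i| ≤ C) : Measurable (impulseSum θ k w) :=
  measurable_tsum_of_summable
    (fun i => Measurable.ite measurableSet_Ioi (by fun_prop) measurable_const)
    (summable_impulseTerm hω hθ hk hw)

end Impulses

section SupContraction

variable {α E : Type*} [NormedAddCommGroup E]

def IsSupContraction (P : (α → E) → Prop) (T : (α → E) → α → E) (c : ℝ) : Prop :=
  ∀ φ ψ, P φ → P ψ → ∀ d, 0 ≤ d → (∀ s, ‖φ s - ψ s‖ ≤ d) → ∀ t, ‖T φ t - T ψ t‖ ≤ c * d

variable {P : (α → E) → Prop} {T : (α → E) → α → E} {c : ℝ}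

lemma tendsto_mul_pow_nhds_zero (hc0 : 0 ≤ c) (hc1 : c < 1) (a : ℝ) :
    Tendsto (fun n : ℕ => a * c ^ n) atTop (𝓝 0) := by
  simpa using (tendsto_pow_atTop_nhds_zero_of_lt_one hc0 hc1).const_mul a

theorem IsSupContraction.eq_of_isFixedPt (hT : IsSupContraction P T c) (hc0 : 0 ≤ c)
    (hc1 : c < 1) {φ ψ : α → E} (hφ : P φ) (hψ : P ψ) (hφb : ∃ B, ∀ t, ‖φ t‖ ≤ B)
    (hψb : ∃ B, ∀ t, ‖ψ t‖ ≤ B) (hφT : T φ = φ) (hψT : T ψ = ψ) : φ = ψ := by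
  obtain ⟨B₁, hB₁⟩ := hφb
  obtain ⟨B₂, hB₂⟩ := hψb
  have hpow (n : ℕ) : ∀ s, ‖φ s - ψ s‖ ≤ (B₁ + B₂) * c ^ n := by
    induction n with
    | zero => simpa using fun s => (norm_sub_le _ _).trans (add_le_add (hB₁ s) (hB₂ s))
    | succ n ih =>
      intro s
      have := hT φ ψ hφ hψ _ ((norm_nonneg _).trans (ih s)) ih s
      rw [hφT, hψT] at this
      exact this.trans_eq (by ring)
  funext s
  rw [← sub_eq_zero, ← norm_le_zero_iff]
  exact ge_of_tendsto' (tendsto_mul_pow_nhds_zero hc0 hc1 _) fun n => hpow n s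

theorem IsSupContraction.exists_isFixedPt [CompleteSpace E] (hT : IsSupContraction P T c)
    (hc0 : 0 ≤ c) (hc1 : c < 1) (hP0 : P 0) (hPT : ∀ φ, P φ → P (T φ))
    (hPlim : ∀ (u : ℕ → α → E) (ξ : α → E), (∀ n, P (u n)) →
      (∀ t, Tendsto (fun n => u n t) atTop (𝓝 (ξ t))) → P ξ)
    (hT0 : ∃ M, ∀ t, ‖T 0 t‖ ≤ M) : ∃ ξ, P ξ ∧ (∃ B, ∀ t, ‖ξ t‖ ≤ B) ∧ T ξ = ξ := by
  obtain ⟨M, hM⟩ := hT0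
  set u : ℕ → α → E := fun n => T^[n] 0
  have hu_succ (n : ℕ) : u (n + 1) = T (u n) := Function.iterate_succ_apply' _ _ _
  have huP (n : ℕ) : P (u n) := by
    induction n with
    | zero => exact hP0
    | succ n ih => rw [hu_succ]; exact hPT _ ih
  have hgap (n : ℕ) : ∀ t, dist (u n t) (u (n + 1) t) ≤ M * c ^ n := by
    induction n with
    | zero => simpa [u, dist_eq_norm, norm_sub_rev] using hM
    | succ n ih =>
      intro t
      simp only [dist_eq_norm] at ih ⊢
      have hstep := hT _ _ (huP n) (huP (n + 1)) _ ((norm_nonneg _).trans (ih t)) ih t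
      rw [← hu_succ n, ← hu_succ (n + 1)] at hstep
      refine hstep.trans_eq ?_
      ring
  choose ξ hξ using fun t =>
    cauchySeq_tendsto_of_complete (cauchySeq_of_le_geometric c M hc1 fun n => hgap n t)
  have hrate (n : ℕ) (t : α) : ‖u n t - ξ t‖ ≤ M / (1 - c) * c ^ n := by
    rw [← dist_eq_norm]
    exact (dist_le_of_le_geometric_of_tendsto c M hc1 (fun n => hgap n t) (hξ t) n).trans_eq
      (by ring)
  have hξP : P ξ := hPlim u ξ huP hξ
  refine ⟨ξ, hξP, ⟨M / (1 - c), fun t => by simpa [u] using hrate 0 t⟩, funext fun t => ?_⟩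
  have hlim : Tendsto (fun n => T (u n) t) atTop (𝓝 (ξ t)) := by
    have := (hξ t).comp (tendsto_add_atTop_nat 1)
    simp only [Function.comp_def, hu_succ] at this
    exact this
  refine tendsto_nhds_unique ?_ hlim
  rw [tendsto_iff_norm_sub_tendsto_zero]
  refine squeeze_zero (fun n => norm_nonneg _) (fun n => ?_)
    (tendsto_mul_pow_nhds_zero hc0 hc1 (c * (M / (1 - c))))
  refine (hT _ _ (huP n) hξP _ ((norm_nonneg _).trans (hrate n t)) (hrate n) t).trans_eq ?_
  ring

end SupContraction

theorem exists_unique_fixedPt_of_eNorm_contraction {α : Type*} [MeasurableSpace α] {n : ℕ}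
    {T : (α → Fin n → ℝ) → α → Fin n → ℝ} {c : ℝ} (hc0 : 0 ≤ c) (hc1 : c < 1)
    (hTm : ∀ φ, Measurable φ → Measurable (T φ)) (hT0 : ∃ M, ∀ t, eNorm (T 0 t) ≤ M)
    (hT : ∀ φ ψ : α → Fin n → ℝ, Measurable φ → Measurable ψ → ∀ d, 0 ≤ d →
      (∀ s, eNorm (fun j => φ s j - ψ s j) ≤ d) → ∀ t, eNorm (fun j => T φ t j - T ψ t j) ≤ c * d) :
    ∃ ξ : α → Fin n → ℝ, (Measurable ξ ∧ (∃ B, ∀ t, eNorm (ξ t) ≤ B) ∧ ∀ t, ξ t = T ξ t) ∧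
      ∀ ζ : α → Fin n → ℝ,
        (Measurable ζ ∧ (∃ B, ∀ t, eNorm (ζ t) ≤ B) ∧ ∀ t, ζ t = T ζ t) → ζ = ξ := by
  -- Transport to `EuclideanSpace`, where `eNorm` is the norm.
  let T' (u : α → EuclideanSpace ℝ (Fin n)) (t : α) : EuclideanSpace ℝ (Fin n) :=
    WithLp.toLp 2 (T (fun s => (u s).ofLp) t)
  have hT' : IsSupContraction Measurable T' c := fun u v hu hv d hd huv t =>
    (eNorm_sub_eq _ _).symm.trans_le
      (hT _ _ (by fun_prop) (by fun_prop) d hd (fun s => (eNorm_sub_eq _ _).trans_le (huv s)) t)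
  obtain ⟨M, hM⟩ := hT0
  obtain ⟨ξ, hξm, ⟨B, hξB⟩, hξT⟩ := hT'.exists_isFixedPt hc0 hc1 measurable_const
    (fun u hu => (PiLp.continuous_toLp 2 _).measurable.comp (hTm _ (by fun_prop)))
    (fun u ξ hu hlim => measurable_of_tendsto_metrizable hu (tendsto_pi_nhds.2 hlim))
    ⟨M, fun t => (eNorm_eq_norm_toLp _).symm.trans_le (hM t)⟩
  refine ⟨fun t => (ξ t).ofLp, ⟨by fun_prop, ⟨B, fun t => (eNorm_eq_norm_toLp _).trans_le (hξB t)⟩,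
    fun t => congrArg WithLp.ofLp (congrFun hξT t).symm⟩, ?_⟩
  rintro ζ ⟨hζm, ⟨Bζ, hζB⟩, hζT⟩
  have hζξ := hT'.eq_of_isFixedPt hc0 hc1 (φ := fun t => WithLp.toLp 2 (ζ t)) (by fun_prop) hξm
    ⟨Bζ, fun t => (eNorm_eq_norm_toLp _).symm.trans_le (hζB t)⟩ ⟨B, hξB⟩
    (funext fun t => congrArg (WithLp.toLp 2) (hζT t).symm) hξT
  funext t
  exact congrArg WithLp.ofLp (congrFun hζξ t)

section Tmap

variable {m : ℕ} {ω I₀ lJ mJ : ℝ} {θ : ℤ → ℝ} {k l mc : Fin (m + 1) → ℝ}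
  {g₀ : (Fin m → ℝ) → ℝ} {g : Fin (m + 1) → ℝ → ℝ} {J₀ : ℝ → ℝ} {φ ψ : ℝ → Fin (m + 1) → ℝ}

lemma Tmap_apply_zero (t : ℝ) : Tmap m θ k I₀ g₀ g J₀ φ t 0 =
    -expKernelIntegral (k 0) (fun s => g₀ fun i => φ s 0 - φ s i.succ) t
      + impulseSum θ (k 0) (fun i => I₀ + J₀ (φ (θ i) 0)) t := by
  simp only [Tmap, if_pos]
  rfl

lemma Tmap_apply_of_ne_zero (t : ℝ) {j : Fin (m + 1)} (hj : j ≠ 0) :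
    Tmap m θ k I₀ g₀ g J₀ φ t j = expKernelIntegral (k j) (fun s => g j (φ s 0 - φ s j)) t := by
  simp only [Tmap, if_neg hj]
  rfl

lemma abs_add_J₀_le (hI : 0 < I₀) (hJbd : ∀ a, |J₀ a| ≤ mJ) (a : ℝ) : |I₀ + J₀ a| ≤ I₀ + mJ :=
  (abs_add_le _ _).trans (add_le_add (abs_of_pos hI).le (hJbd a))

lemma measurable_Tmap (hω : 0 < ω) (hθ : ∀ i : ℤ, (i : ℝ) * ω ≤ θ i ∧ θ i < ((i : ℝ) + 1) * ω)
    (hk : ∀ j, 0 < k j) (hI : 0 < I₀) (hg₀ : Continuous g₀) (hg : ∀ j, j ≠ 0 → Continuous (g j))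
    (hJbd : ∀ a, |J₀ a| ≤ mJ) (hφ : Measurable φ) : Measurable (Tmap m θ k I₀ g₀ g J₀ φ) := by
  rw [measurable_pi_iff]
  intro j
  rcases eq_or_ne j 0 with rfl | hj
  · simp_rw [Tmap_apply_zero]
    exact (measurable_expKernelIntegral _ (by fun_prop)).neg.add
      (measurable_impulseSum hω hθ (hk 0) fun i => abs_add_J₀_le hI hJbd _)
  · simp_rw [Tmap_apply_of_ne_zero _ hj]
    have hgj := hg j hj
    exact measurable_expKernelIntegral _ (by fun_prop)

lemma abs_Tmap_le (hω : 0 < ω) (hθ : ∀ i : ℤ, (i : ℝ) * ω ≤ θ i ∧ θ i < ((i : ℝ) + 1) * ω)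
    (hk : ∀ j, 0 < k j) (hI : 0 < I₀) (hg₀bd : ∀ z, |g₀ z| ≤ mc 0)
    (hgbd : ∀ j, j ≠ 0 → ∀ a, |g j a| ≤ mc j) (hJbd : ∀ a, |J₀ a| ≤ mJ) (t : ℝ) :
    |Tmap m θ k I₀ g₀ g J₀ φ t 0| ≤
        mc 0 / k 0 + (I₀ + mJ) * exp (k 0 * ω) / (1 - exp (-(k 0) * ω)) ∧
      ∀ j, j ≠ 0 → |Tmap m θ k I₀ g₀ g J₀ φ t j| ≤ mc j / k j := by
  refine ⟨?_, fun j hj => ?_⟩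
  · rw [Tmap_apply_zero, mul_div_assoc]
    refine (abs_add_le _ _).trans (add_le_add ?_ ?_)
    · rw [abs_neg]
      exact abs_expKernelIntegral_le (hk 0) (fun s => hg₀bd _) t
    · exact abs_impulseSum_le hω hθ (hk 0) (fun i => abs_add_J₀_le hI hJbd _) t
  · rw [Tmap_apply_of_ne_zero t hj]
    exact abs_expKernelIntegral_le (hk j) (fun s => hgbd j hj _) t

lemma abs_Tmap_apply_zero_sub_le (hω : 0 < ω)
    (hθ : ∀ i : ℤ, (i : ℝ) * ω ≤ θ i ∧ θ i < ((i : ℝ) + 1) * ω) (hk : 0 < k 0)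
    (hg₀ : Continuous g₀) (hl : 0 ≤ l 0) (hlJ : 0 ≤ lJ)
    (hg₀lip : ∀ z w : Fin m → ℝ, |g₀ z - g₀ w| ≤ l 0 * eNorm (fun i => z i - w i))
    (hJlip : ∀ a b : ℝ, |J₀ a - J₀ b| ≤ lJ * |a - b|) (hg₀bd : ∀ z, |g₀ z| ≤ mc 0)
    (hJbd : ∀ a, |J₀ a| ≤ mJ) (hφ : Measurable φ) (hψ : Measurable ψ) {d : ℝ}
    (hd : ∀ s, eNorm (fun j => φ s j - ψ s j) ≤ d) (t : ℝ) :
    |Tmap m θ k I₀ g₀ g J₀ φ t 0 - Tmap m θ k I₀ g₀ g J₀ ψ t 0| ≤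
      (l 0 * √(2 * m) / k 0 + lJ * exp (k 0 * ω) / (1 - exp (-(k 0) * ω))) * d := by
  have hG (s : ℝ) : |g₀ (fun i => φ s 0 - φ s i.succ) - g₀ (fun i => ψ s 0 - ψ s i.succ)| ≤
      l 0 * √(2 * m) * d := calc
    _ ≤ l 0 * eNorm (fun i : Fin m =>
          (fun j => φ s j - ψ s j) 0 - (fun j => φ s j - ψ s j) i.succ) := by
        refine (hg₀lip _ _).trans_eq ?_
        congr 2
        funext i
        ring
    _ ≤ l 0 * (√(2 * m) * d) := mul_le_mul_of_nonneg_left ((eNorm_sub_succ_le _).trans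
        (mul_le_mul_of_nonneg_left (hd s) (Real.sqrt_nonneg _))) hl
    _ = l 0 * √(2 * m) * d := by ring
  have hJ (i : ℤ) : |(I₀ + J₀ (φ (θ i) 0)) - (I₀ + J₀ (ψ (θ i) 0))| ≤ lJ * d := by
    rw [add_sub_add_left_eq_sub]
    exact (hJlip _ _).trans (mul_le_mul_of_nonneg_left
      ((abs_le_eNorm (fun j => φ (θ i) j - ψ (θ i) j) 0).trans (hd _)) hlJ)
  have hpulse (χ : ℝ → Fin (m + 1) → ℝ) (i : ℤ) : |I₀ + J₀ (χ (θ i) 0)| ≤ |I₀| + mJ :=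
    (abs_add_le _ _).trans (add_le_add_right (hJbd _) _)
  have hint := abs_expKernelIntegral_sub_le hk (by fun_prop) (by fun_prop) (fun s => hg₀bd _)
    (fun s => hg₀bd _) hG t
  have hsum := abs_impulseSum_sub_le hω hθ hk (hpulse φ) (hpulse ψ) hJ t
  have habs (a a' b b' : ℝ) : |(-a + b) - (-a' + b')| ≤ |a - a'| + |b - b'| := by
    rw [show (-a + b) - (-a' + b') = -(a - a') + (b - b') by ring, ← abs_neg (a - a')]
    exact abs_add_le _ _
  rw [Tmap_apply_zero, Tmap_apply_zero]
  exact (habs _ _ _ _).trans ((add_le_add hint hsum).trans_eq (by ring))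

lemma abs_Tmap_apply_sub_le_of_ne_zero {j : Fin (m + 1)} (hj : j ≠ 0) (hk : 0 < k j)
    (hg : Continuous (g j)) (hl : 0 ≤ l j) (hglip : ∀ a b : ℝ, |g j a - g j b| ≤ l j * |a - b|)
    (hgbd : ∀ a, |g j a| ≤ mc j) (hφ : Measurable φ) (hψ : Measurable ψ) {d : ℝ}
    (hd : ∀ s, eNorm (fun j => φ s j - ψ s j) ≤ d) (t : ℝ) :
    |Tmap m θ k I₀ g₀ g J₀ φ t j - Tmap m θ k I₀ g₀ g J₀ ψ t j| ≤ √2 * (l j / k j) * d := by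
  rw [Tmap_apply_of_ne_zero t hj, Tmap_apply_of_ne_zero t hj]
  refine (abs_expKernelIntegral_sub_le (D := l j * (√2 * d)) hk (by fun_prop) (by fun_prop)
    (fun s => hgbd _) (fun s => hgbd _) (fun s => ?_) t).trans_eq (by ring)
  calc |g j (φ s 0 - φ s j) - g j (ψ s 0 - ψ s j)|
      ≤ l j * |(fun i => φ s i - ψ s i) 0 - (fun i => φ s i - ψ s i) j| :=
        (hglip _ _).trans_eq (by congr 2; ring)
    _ ≤ l j * (√2 * d) := mul_le_mul_of_nonneg_left ((abs_sub_le_sqrt_two_mul_eNorm _ hj.symm).trans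
        (mul_le_mul_of_nonneg_left (hd s) (Real.sqrt_nonneg _))) hl

lemma eNorm_Tmap_sub_le (hω : 0 < ω)
    (hθ : ∀ i : ℤ, (i : ℝ) * ω ≤ θ i ∧ θ i < ((i : ℝ) + 1) * ω) (hk : ∀ j, 0 < k j)
    (hg₀ : Continuous g₀) (hg : ∀ j, j ≠ 0 → Continuous (g j)) (hl : ∀ j, 0 ≤ l j) (hlJ : 0 ≤ lJ)
    (hg₀lip : ∀ z w : Fin m → ℝ, |g₀ z - g₀ w| ≤ l 0 * eNorm (fun i => z i - w i))
    (hglip : ∀ j, j ≠ 0 → ∀ a b : ℝ, |g j a - g j b| ≤ l j * |a - b|)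
    (hJlip : ∀ a b : ℝ, |J₀ a - J₀ b| ≤ lJ * |a - b|) (hg₀bd : ∀ z, |g₀ z| ≤ mc 0)
    (hgbd : ∀ j, j ≠ 0 → ∀ a, |g j a| ≤ mc j) (hJbd : ∀ a, |J₀ a| ≤ mJ)
    (hφ : Measurable φ) (hψ : Measurable ψ) {d : ℝ} (hd0 : 0 ≤ d)
    (hd : ∀ s, eNorm (fun j => φ s j - ψ s j) ≤ d) (t : ℝ) :
    eNorm (fun j => Tmap m θ k I₀ g₀ g J₀ φ t j - Tmap m θ k I₀ g₀ g J₀ ψ t j) ≤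
      √2 * √((l 0 * √(2 * m) / k 0 + lJ * exp (k 0 * ω) / (1 - exp (-(k 0) * ω))) ^ 2 +
        ∑ i : Fin m, (l i.succ / k i.succ) ^ 2) * d := by
  set A := l 0 * √(2 * m) / k 0 + lJ * exp (k 0 * ω) / (1 - exp (-(k 0) * ω))
  set S := ∑ i : Fin m, (l i.succ / k i.succ) ^ 2
  have hsq : (A * d) ^ 2 + ∑ i : Fin m, (√2 * (l i.succ / k i.succ) * d) ^ 2 ≤
      (√2 * √(A ^ 2 + S) * d) ^ 2 := by
    simp only [mul_pow, Real.sq_sqrt zero_le_two, Real.sq_sqrt (by positivity : 0 ≤ A ^ 2 + S),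
      ← Finset.sum_mul, ← Finset.mul_sum]
    nlinarith [sq_nonneg (A * d)]
  calc _ ≤ √((A * d) ^ 2 + ∑ i : Fin m, (√2 * (l i.succ / k i.succ) * d) ^ 2) :=
        eNorm_le_of_abs_le (abs_Tmap_apply_zero_sub_le hω hθ (hk 0) hg₀ (hl 0) hlJ hg₀lip hJlip
          hg₀bd hJbd hφ hψ hd t) fun i => abs_Tmap_apply_sub_le_of_ne_zero (Fin.succ_ne_zero i)
          (hk _) (hg _ (Fin.succ_ne_zero i)) (hl _) (hglip _ (Fin.succ_ne_zero i))
          (hgbd _ (Fin.succ_ne_zero i)) hφ hψ hd t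
    _ ≤ √((√2 * √(A ^ 2 + S) * d) ^ 2) := Real.sqrt_le_sqrt hsq
    _ = _ := Real.sqrt_sq (by positivity)

end Tmap

theorem stmt4_general
    (m : ℕ) (ω : ℝ) (hω : 0 < ω) (θ : ℤ → ℝ)
    (hθ : ∀ i : ℤ, (i : ℝ) * ω ≤ θ i ∧ θ i < ((i : ℝ) + 1) * ω)
    (k : Fin (m + 1) → ℝ) (hk : ∀ j, 0 < k j) (I₀ : ℝ) (hI : 0 < I₀)
    (g₀ : (Fin m → ℝ) → ℝ) (g : Fin (m + 1) → ℝ → ℝ) (J₀ : ℝ → ℝ)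
    (l : Fin (m + 1) → ℝ) (lJ : ℝ) (mc : Fin (m + 1) → ℝ) (mJ : ℝ)
    (hl : ∀ j, 0 ≤ l j) (hlJ : 0 ≤ lJ)
    (hg₀lip : ∀ z w : Fin m → ℝ, |g₀ z - g₀ w| ≤ l 0 * eNorm (fun i => z i - w i))
    (hglip : ∀ j, j ≠ 0 → ∀ a b : ℝ, |g j a - g j b| ≤ l j * |a - b|)
    (hJlip : ∀ a b : ℝ, |J₀ a - J₀ b| ≤ lJ * |a - b|)
    (hg₀bd : ∀ z, |g₀ z| ≤ mc 0)
    (hgbd : ∀ j, j ≠ 0 → ∀ a, |g j a| ≤ mc j)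
    (hJbd : ∀ a, |J₀ a| ≤ mJ)
    (hL : Real.sqrt 2 * Real.sqrt ((l 0 * Real.sqrt (2 * m) / k 0 + lJ * Real.exp (k 0 * ω) / (1 - Real.exp (-(k 0) * ω))) ^ 2 + ∑ i : Fin m, (l i.succ / k i.succ) ^ 2) < 1) :
    ∃ ξ : ℝ → Fin (m + 1) → ℝ,
      (Measurable ξ ∧ (∃ B, ∀ t, eNorm (ξ t) ≤ B) ∧ ∀ t, ξ t = Tmap m θ k I₀ g₀ g J₀ ξ t) ∧
      ξ ∈ OmegaSet m ω k mc I₀ mJ ∧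
      ∀ ζ : ℝ → Fin (m + 1) → ℝ,
        (Measurable ζ ∧ (∃ B, ∀ t, eNorm (ζ t) ≤ B) ∧ ∀ t, ζ t = Tmap m θ k I₀ g₀ g J₀ ζ t) →
        ζ = ξ := by
  have hg₀ : Continuous g₀ := continuous_of_abs_sub_le_mul_eNorm hg₀lip
  have hg (j) (hj : j ≠ 0) : Continuous (g j) :=
    (LipschitzWith.of_dist_le' (hglip j hj)).continuous
  have hbound (φ : ℝ → Fin (m + 1) → ℝ) (t : ℝ) :=
    abs_Tmap_le (φ := φ) hω hθ hk hI hg₀bd hgbd hJbd t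
  obtain ⟨ξ, hξ, huniq⟩ := exists_unique_fixedPt_of_eNorm_contraction (by positivity) hL
    (fun φ hφ => measurable_Tmap hω hθ hk hI hg₀ hg hJbd hφ)
    ⟨_, fun t => eNorm_le_of_abs_le (hbound 0 t).1 fun i => (hbound 0 t).2 _ (Fin.succ_ne_zero i)⟩
    (fun φ ψ hφ hψ d hd => eNorm_Tmap_sub_le hω hθ hk hg₀ hg hl hlJ hg₀lip hglip hJlip hg₀bd hgbd
      hJbd hφ hψ hd)
  refine ⟨ξ, hξ, ⟨hξ.1, hξ.2.1, fun t => ?_⟩, huniq⟩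
  rw [hξ.2.2 t]
  exact hbound ξ t

/-- Assume `√2·L < 1`. Then there exists exactly one bounded measurable
`ξ : ℝ → ℝ^{m+1}` with `ξ = Tξ` pointwise on `ℝ`, and this `ξ` belongs to `Ω`
(existence-and-uniqueness part of Theorem 1). -/
theorem stmt4
    (m : ℕ) (hm : 1 ≤ m) (ω : ℝ) (hω : 0 < ω) (θ : ℤ → ℝ)
    (hθ : ∀ i : ℤ, (i : ℝ) * ω ≤ θ i ∧ θ i < ((i : ℝ) + 1) * ω)
    (k : Fin (m + 1) → ℝ) (hk : ∀ j, 0 < k j) (I₀ : ℝ) (hI : 0 < I₀)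
    (g₀ : (Fin m → ℝ) → ℝ) (g : Fin (m + 1) → ℝ → ℝ) (J₀ : ℝ → ℝ)
    (l : Fin (m + 1) → ℝ) (lJ : ℝ) (mc : Fin (m + 1) → ℝ) (mJ : ℝ)
    (hl : ∀ j, 0 ≤ l j) (hlJ : 0 ≤ lJ) (hmc : ∀ j, 0 ≤ mc j) (hmJ : 0 ≤ mJ)
    (hg₀lip : ∀ z w : Fin m → ℝ, |g₀ z - g₀ w| ≤ l 0 * eNorm (fun i => z i - w i))
    (hglip : ∀ j, j ≠ 0 → ∀ a b : ℝ, |g j a - g j b| ≤ l j * |a - b|)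
    (hJlip : ∀ a b : ℝ, |J₀ a - J₀ b| ≤ lJ * |a - b|)
    (hg₀bd : ∀ z, |g₀ z| ≤ mc 0)
    (hgbd : ∀ j, j ≠ 0 → ∀ a, |g j a| ≤ mc j)
    (hJbd : ∀ a, |J₀ a| ≤ mJ)
    (hL : Real.sqrt 2 * Real.sqrt ((l 0 * Real.sqrt (2 * m) / k 0 + lJ * Real.exp (k 0 * ω) / (1 - Real.exp (-(k 0) * ω))) ^ 2 + ∑ i : Fin m, (l i.succ / k i.succ) ^ 2) < 1) :
    ∃ ξ : ℝ → Fin (m + 1) → ℝ,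
      (Measurable ξ ∧ (∃ B, ∀ t, eNorm (ξ t) ≤ B) ∧ ∀ t, ξ t = Tmap m θ k I₀ g₀ g J₀ ξ t) ∧
      ξ ∈ OmegaSet m ω k mc I₀ mJ ∧
      ∀ ζ : ℝ → Fin (m + 1) → ℝ,
        (Measurable ζ ∧ (∃ B, ∀ t, eNorm (ζ t) ≤ B) ∧ ∀ t, ζ t = Tmap m θ k I₀ g₀ g J₀ ζ t) →
        ζ = ξ :=
  stmt4_general m ω hω θ hθ k hk I₀ hI g₀ g J₀ l lJ mc mJ hl hlJ hg₀lip hglip hJlip hg₀bd hgbd hJbd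
    hL
end

section
/- Assume in addition that J₀ ≥ 0 everywhere. Then every bounded measurable ξ : ℝ → ℝ^{m+1} with ξ = Tξ satisfies, for all t ∈ ℝ: ξ₀(t) ≥ I₀·e^{−2k₀ω}/(1 − e^{−k₀ω}) − m₀/k₀, |ξ_j(t)| ≤ m_j/k_j for j = 1,…,m, and consequently ξ₀(t) − ξ_j(t) ≥ I₀·e^{−2k₀ω}/(1 − e^{−k₀ω}) − m₀/k₀ − m_j/k_j for each j = 1,…,m. (These are the lower-bound and separation estimates in the proof of Theorem 2; the factor e^{−2k₀ω} is the bound that condition (C4) guarantees for the impulsive sum.) -/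
open MeasureTheory Set

lemma exp_neg_mul_sub_eq (κ t s : ℝ) :
    Real.exp (-κ * (t - s)) = Real.exp (-κ * t) * Real.exp (κ * s) := by
  rw [← Real.exp_add]
  ring_nf

lemma integrableOn_exp_neg_mul_sub {κ : ℝ} (hκ : 0 < κ) (t : ℝ) :
    IntegrableOn (fun s => Real.exp (-κ * (t - s))) (Iic t) := by
  simp_rw [exp_neg_mul_sub_eq κ t]
  exact (integrableOn_exp_mul_Iic hκ t).const_mul _

lemma integral_exp_neg_mul_sub {κ : ℝ} (hκ : 0 < κ) (t : ℝ) :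
    ∫ s in Iic t, Real.exp (-κ * (t - s)) = κ⁻¹ := by
  simp_rw [exp_neg_mul_sub_eq κ t, integral_const_mul, integral_exp_mul_Iic hκ, mul_div_assoc',
    ← Real.exp_add]
  simp

lemma abs_integral_exp_neg_mul_sub_mul_le {κ M : ℝ} (hκ : 0 < κ) (t : ℝ) {u : ℝ → ℝ}
    (hu : ∀ s, |u s| ≤ M) :
    |∫ s in Iic t, Real.exp (-κ * (t - s)) * u s| ≤ M / κ := by
  calc |∫ s in Iic t, Real.exp (-κ * (t - s)) * u s|
      ≤ ∫ s in Iic t, Real.exp (-κ * (t - s)) * M := by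
        rw [← Real.norm_eq_abs]
        refine norm_integral_le_of_norm_le ((integrableOn_exp_neg_mul_sub hκ t).mul_const M)
          (ae_of_all _ fun s => ?_)
        rw [norm_mul, Real.norm_of_nonneg (Real.exp_pos _).le]
        exact mul_le_mul_of_nonneg_left (hu s) (Real.exp_pos _).le
    _ = M / κ := by
      rw [integral_mul_const, integral_exp_neg_mul_sub hκ, inv_mul_eq_div]

section ImpulseSum

variable {κ ω t : ℝ} {θ : ℤ → ℝ}

lemma summable_impulse (hκ : 0 < κ) (hω : 0 < ω)
    (hθ : ∀ i : ℤ, (i : ℝ) * ω ≤ θ i ∧ θ i < ((i : ℝ) + 1) * ω) {c : ℤ → ℝ} {C : ℝ}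
    (hc : ∀ i, |c i| ≤ C) :
    Summable fun i : ℤ => if θ i < t then Real.exp (-κ * (t - θ i)) * c i else 0 := by
  have hr : Real.exp (-κ * ω) < 1 := Real.exp_lt_one_iff.mpr (by nlinarith)
  have hC : 0 ≤ C := (abs_nonneg _).trans (hc 0)
  refine Summable.of_norm (Summable.of_nat_of_neg ?_ ?_)
  · refine summable_of_ne_finset_zero (s := Finset.range ⌈t / ω⌉₊) fun n hn => ?_
    rw [Finset.mem_range, not_lt] at hn
    have htn : t ≤ (n : ℝ) * ω :=
      (div_le_iff₀ hω).mp ((Nat.le_ceil _).trans (by exact_mod_cast hn))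
    have hθn : ¬θ n < t := not_lt.mpr (htn.trans (by exact_mod_cast (hθ n).1))
    simp [hθn]
  · refine Summable.of_nonneg_of_le (fun n => norm_nonneg _) (fun n => ?_)
      ((summable_geometric_of_lt_one (Real.exp_pos _).le hr).mul_left
        (C * Real.exp (-κ * (t - ω))))
    split_ifs
    · have hθn := (hθ (-n)).2
      push_cast at hθn
      calc ‖Real.exp (-κ * (t - θ (-n))) * c (-n)‖
          = |c (-n)| * Real.exp (-κ * (t - θ (-n))) := by
            rw [norm_mul, Real.norm_of_nonneg (Real.exp_pos _).le, Real.norm_eq_abs, mul_comm]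
        _ ≤ C * Real.exp (-κ * (t - ω) + n * (-κ * ω)) :=
            mul_le_mul (hc _) (Real.exp_le_exp.mpr (by nlinarith)) (Real.exp_pos _).le hC
        _ = C * Real.exp (-κ * (t - ω)) * Real.exp (-κ * ω) ^ n := by
            rw [Real.exp_add, Real.exp_nat_mul, mul_assoc]
    · rw [norm_zero]
      positivity

lemma le_tsum_impulse (hκ : 0 < κ) (hω : 0 < ω)
    (hθ : ∀ i : ℤ, (i : ℝ) * ω ≤ θ i ∧ θ i < ((i : ℝ) + 1) * ω) {c : ℤ → ℝ} {I₀ : ℝ}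
    (hI : 0 ≤ I₀) (hc : ∀ i, I₀ ≤ c i)
    (hs : Summable fun i : ℤ => if θ i < t then Real.exp (-κ * (t - θ i)) * c i else 0) :
    I₀ * Real.exp (-(2 * κ * ω)) / (1 - Real.exp (-κ * ω)) ≤
      ∑' i : ℤ, if θ i < t then Real.exp (-κ * (t - θ i)) * c i else 0 := by
  set r := Real.exp (-κ * ω)
  have hr : r < 1 := Real.exp_lt_one_iff.mpr (by nlinarith)
  obtain ⟨N, hNt, htN⟩ : ∃ N : ℤ, ((N : ℝ) + 1) * ω ≤ t ∧ t < ((N : ℝ) + 2) * ω := by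
    refine ⟨⌊t / ω⌋ - 1, ?_, ?_⟩ <;> push_cast
    · rw [sub_add_cancel]
      exact (le_div_iff₀ hω).mp (Int.floor_le _)
    · rw [show (⌊t / ω⌋ : ℝ) - 1 + 2 = ⌊t / ω⌋ + 1 by ring]
      exact (div_lt_iff₀ hω).mp (Int.lt_floor_add_one _)
  have hinj : Function.Injective fun n : ℕ => N - n := fun a b h => by simpa using h
  have hterm (n : ℕ) : I₀ * Real.exp (-(2 * κ * ω)) * r ^ n ≤
      if θ (N - n) < t then Real.exp (-κ * (t - θ (N - n))) * c (N - n) else 0 := by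
    obtain ⟨hlo, hhi⟩ := hθ (N - n)
    push_cast at hlo hhi
    rw [if_pos (by nlinarith [(n.cast_nonneg : (0 : ℝ) ≤ n)])]
    calc I₀ * Real.exp (-(2 * κ * ω)) * r ^ n
          = Real.exp (-(2 * κ * ω) + n * (-κ * ω)) * I₀ := by
          rw [Real.exp_add, Real.exp_nat_mul]; ring
      _ ≤ Real.exp (-κ * (t - θ (N - n))) * c (N - n) :=
          mul_le_mul (Real.exp_le_exp.mpr (by nlinarith)) (hc _) hI (Real.exp_pos _).le
  have hnonneg (i : ℤ) : 0 ≤ if θ i < t then Real.exp (-κ * (t - θ i)) * c i else 0 := by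
    split_ifs
    · exact mul_nonneg (Real.exp_pos _).le (hI.trans (hc i))
    · exact le_rfl
  calc I₀ * Real.exp (-(2 * κ * ω)) / (1 - r)
        = ∑' n : ℕ, I₀ * Real.exp (-(2 * κ * ω)) * r ^ n := by
        rw [tsum_mul_left, tsum_geometric_of_lt_one (Real.exp_pos _).le hr, div_eq_mul_inv]
    _ ≤ _ := Summable.tsum_le_tsum hterm
        ((summable_geometric_of_lt_one (Real.exp_pos _).le hr).mul_left _)
        (hs.comp_injective hinj)
    _ ≤ _ := tsum_comp_le_tsum_of_inj hs hnonneg hinj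

end ImpulseSum

theorem stmt9_general
    (m : ℕ) (ω : ℝ) (hω : 0 < ω) (θ : ℤ → ℝ)
    (hθ : ∀ i : ℤ, (i : ℝ) * ω ≤ θ i ∧ θ i < ((i : ℝ) + 1) * ω)
    (k : Fin (m + 1) → ℝ) (hk : ∀ j, 0 < k j) (I₀ : ℝ) (hI : 0 < I₀)
    (g₀ : (Fin m → ℝ) → ℝ) (g : Fin (m + 1) → ℝ → ℝ) (J₀ : ℝ → ℝ)
    (mc : Fin (m + 1) → ℝ) (mJ : ℝ)
    (hg₀bd : ∀ z, |g₀ z| ≤ mc 0)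
    (hgbd : ∀ j, j ≠ 0 → ∀ a, |g j a| ≤ mc j)
    (hJbd : ∀ a, |J₀ a| ≤ mJ)
    (hJpos : ∀ a : ℝ, 0 ≤ J₀ a) :
    ∀ ξ : ℝ → Fin (m + 1) → ℝ,
      (Measurable ξ ∧ (∃ B, ∀ t, eNorm (ξ t) ≤ B) ∧ ∀ t, ξ t = Tmap m θ k I₀ g₀ g J₀ ξ t) →
      ∀ t : ℝ,
        I₀ * Real.exp (-(2 * k 0 * ω)) / (1 - Real.exp (-(k 0) * ω)) - mc 0 / k 0 ≤ ξ t 0 ∧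
        (∀ j, j ≠ 0 → |ξ t j| ≤ mc j / k j) ∧
        (∀ j, j ≠ 0 →
          I₀ * Real.exp (-(2 * k 0 * ω)) / (1 - Real.exp (-(k 0) * ω)) - mc 0 / k 0 - mc j / k j ≤ ξ t 0 - ξ t j) := by
  rintro ξ ⟨-, -, hfix⟩ t
  have hξ : ∀ j, ξ t j = Tmap m θ k I₀ g₀ g J₀ ξ t j := fun j => congrFun (hfix t) j
  have hcomp : ∀ j, j ≠ 0 → |ξ t j| ≤ mc j / k j := fun j hj => by
    rw [hξ, Tmap, if_neg hj]
    exact abs_integral_exp_neg_mul_sub_mul_le (hk j) t fun s => hgbd j hj _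
  have h0 :
      I₀ * Real.exp (-(2 * k 0 * ω)) / (1 - Real.exp (-(k 0) * ω)) - mc 0 / k 0 ≤ ξ t 0 := by
    rw [hξ, Tmap, if_pos rfl]
    have hintegral := (abs_le.mp (abs_integral_exp_neg_mul_sub_mul_le (hk 0) t
      fun s => hg₀bd fun i => ξ s 0 - ξ s i.succ)).2
    have himpulse_bd (i : ℤ) : |I₀ + J₀ (ξ (θ i) 0)| ≤ I₀ + mJ :=
      (abs_add_le _ _).trans (by rw [abs_of_pos hI]; linarith [hJbd (ξ (θ i) 0)])
    have himpulse := le_tsum_impulse (t := t) (hk 0) hω hθ hI.le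
      (fun i => le_add_of_nonneg_right (hJpos (ξ (θ i) 0)))
      (summable_impulse (hk 0) hω hθ himpulse_bd)
    linarith
  refine ⟨h0, hcomp, fun j hj => ?_⟩
  linarith [(abs_le.mp (hcomp j hj)).2]

/-- Assume in addition `J₀ ≥ 0`. Then every bounded measurable fixed point
`ξ = Tξ` satisfies `ξ₀(t) ≥ I₀·e^{−2k₀ω}/(1 − e^{−k₀ω}) − m₀/k₀`, `|ξ_j(t)| ≤ m_j/k_j`,
and `ξ₀(t) − ξ_j(t) ≥ I₀·e^{−2k₀ω}/(1 − e^{−k₀ω}) − m₀/k₀ − m_j/k_j` (the lower-bound and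
separation estimates in the proof of Theorem 2). -/
theorem stmt9
    (m : ℕ) (hm : 1 ≤ m) (ω : ℝ) (hω : 0 < ω) (θ : ℤ → ℝ)
    (hθ : ∀ i : ℤ, (i : ℝ) * ω ≤ θ i ∧ θ i < ((i : ℝ) + 1) * ω)
    (k : Fin (m + 1) → ℝ) (hk : ∀ j, 0 < k j) (I₀ : ℝ) (hI : 0 < I₀)
    (g₀ : (Fin m → ℝ) → ℝ) (g : Fin (m + 1) → ℝ → ℝ) (J₀ : ℝ → ℝ)
    (l : Fin (m + 1) → ℝ) (lJ : ℝ) (mc : Fin (m + 1) → ℝ) (mJ : ℝ)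
    (hl : ∀ j, 0 ≤ l j) (hlJ : 0 ≤ lJ) (hmc : ∀ j, 0 ≤ mc j) (hmJ : 0 ≤ mJ)
    (hg₀lip : ∀ z w : Fin m → ℝ, |g₀ z - g₀ w| ≤ l 0 * eNorm (fun i => z i - w i))
    (hglip : ∀ j, j ≠ 0 → ∀ a b : ℝ, |g j a - g j b| ≤ l j * |a - b|)
    (hJlip : ∀ a b : ℝ, |J₀ a - J₀ b| ≤ lJ * |a - b|)
    (hg₀bd : ∀ z, |g₀ z| ≤ mc 0)
    (hgbd : ∀ j, j ≠ 0 → ∀ a, |g j a| ≤ mc j)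
    (hJbd : ∀ a, |J₀ a| ≤ mJ)
    (hJpos : ∀ a : ℝ, 0 ≤ J₀ a) :
    ∀ ξ : ℝ → Fin (m + 1) → ℝ,
      (Measurable ξ ∧ (∃ B, ∀ t, eNorm (ξ t) ≤ B) ∧ ∀ t, ξ t = Tmap m θ k I₀ g₀ g J₀ ξ t) →
      ∀ t : ℝ,
        I₀ * Real.exp (-(2 * k 0 * ω)) / (1 - Real.exp (-(k 0) * ω)) - mc 0 / k 0 ≤ ξ t 0 ∧
        (∀ j, j ≠ 0 → |ξ t j| ≤ mc j / k j) ∧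
        (∀ j, j ≠ 0 →
          I₀ * Real.exp (-(2 * k 0 * ω)) / (1 - Real.exp (-(k 0) * ω)) - mc 0 / k 0 - mc j / k j ≤ ξ t 0 - ξ t j) :=
  stmt9_general m ω hω θ hθ k hk I₀ hI g₀ g J₀ mc mJ hg₀bd hgbd hJbd hJpos
end
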